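/- Let N, n ∈ ℕ, let x₁,…,x_N, ξ₁,…,ξ_N, β₁,…,β_N, μ₁⁻,…,μ_N⁻, μ₁⁺,…,μ_N⁺, α₁,…,α_n be real numbers and a₁,…,a_n, A₁,…,A_n, C₁⁻,…,C_N⁻, C₁⁺,…,C_N⁺ ∈ ℂ. Let R > 0 and let f be holomorphic on {z ∈ ℂ : |z| > R} with f(z) − z → 0 as |z| → ∞. Suppose there is R' ≥ R such that for all |z| > R' one has f'(z) ≠ 0, f(z) avoids all the points x_k and a_j, z avoids all the points ξ_k, C_k^±, A_j, and the identity Σ_{k=1}^{N}[2/(z−ξ_k) + μ_k⁻/(z−C_k⁻) + μ_k⁺/(z−C_k⁺)] + Σ_{j=1}^{n} α_j/(z−A_j) = (Σ_{k=1}^{N} β_k/(f(z)−x_k) + Σ_{j=1}^{n} α_j/(f(z)−a_j))·f'(z) + 2·f''(z)/f'(z). Then Σ_{k=1}^{N}(2 + μ_k⁻ + μ_k⁺) = Σ_{k=1}^{N} β_k, and 2·Σ_{k=1}^{N} ξ_k = −Σ_{k=1}^{N}(μ_k⁻·C_k⁻ + μ_k⁺·C_k⁺) − Σ_{j=1}^{n}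 α_j·A_j + Σ₀, where Σ₀ = Σ_{k=1}^{N} β_k·x_k + Σ_{j=1}^{n} α_j·a_j. (Formula (14) of Theorem 5.1: the multiple-slit analogue of formula (3), obtained by matching the 1/z and 1/z² coefficients at ∞.) -/

import Mathlib

/-!
Both sides of the identity are of the form `W / z + V / z ^ 2 + o(1 / z ^ 2)` at `∞`, and the
two formulas are the equalities of the coefficients `W` and `V`. A partial fraction `c / (z - q)`
contributes `c / z + c q / z ^ 2`. Cauchy's estimate on discs of radius `|z| / 2` upgrades
`f z - z → 0` to `z (f' z - 1) → 0` and `z ^ 2 f'' z → 0`; hence substituting `f` and multiplying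
by `f'` does not change the coefficients, and `2 f'' / f'` is `o(1 / z ^ 2)`.
-/

open Complex Filter Bornology Metric Topology

theorem norm_pow_succ_smul_deriv_le {F : Type*} [NormedAddCommGroup F] [NormedSpace ℂ F]
    {h : ℂ → F} {ρ C : ℝ} (hd : ∀ w : ℂ, ρ < ‖w‖ → DifferentiableAt ℂ h w) (m : ℕ)
    {z : ℂ} (hz : z ≠ 0) (hρ : ρ < ‖z‖ / 2)
    (hC : ∀ w : ℂ, ‖z‖ / 2 ≤ ‖w‖ → ‖w ^ m • h w‖ ≤ C) :
    ‖z ^ (m + 1) • deriv h z‖ ≤ 2 ^ (m + 1) * C := by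
  set r := ‖z‖ / 2 with hr_def
  have hr : 0 < r := by positivity
  have hball : ∀ w ∈ closedBall z r, r ≤ ‖w‖ := fun w hw => by
    have := norm_sub_norm_le z w
    rw [mem_closedBall, dist_eq_norm, norm_sub_rev] at hw
    linarith
  have hdc : DiffContOnCl ℂ h (ball z r) := DifferentiableOn.diffContOnCl <| by
    rw [closure_ball z hr.ne']
    exact fun w hw => (hd w (hρ.trans_le (hball w hw))).differentiableWithinAt
  have hsphere : ∀ w ∈ sphere z r, ‖h w‖ ≤ C / r ^ m := fun w hw => by
    have hrw := hball w (sphere_subset_closedBall hw)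
    have hw := hC w hrw
    rw [norm_smul, norm_pow] at hw
    rw [le_div_iff₀ (by positivity)]
    calc ‖h w‖ * r ^ m ≤ ‖h w‖ * ‖w‖ ^ m := by gcongr
      _ ≤ C := by linarith
  have hcauchy := Complex.norm_deriv_le_of_forall_mem_sphere_norm_le hr hdc hsphere
  have hz2 : ‖z‖ = 2 * r := by rw [hr_def]; ring
  calc ‖z ^ (m + 1) • deriv h z‖ = (2 * r) ^ (m + 1) * ‖deriv h z‖ := by
        rw [norm_smul, norm_pow, hz2]
    _ ≤ (2 * r) ^ (m + 1) * (C / r ^ m / r) := by gcongr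
    _ = 2 ^ (m + 1) * C := by rw [mul_pow, pow_succ r]; field_simp

theorem tendsto_pow_succ_smul_deriv_cobounded {F : Type*} [NormedAddCommGroup F]
    [NormedSpace ℂ F] {h : ℂ → F} {ρ : ℝ} (hd : ∀ w : ℂ, ρ < ‖w‖ → DifferentiableAt ℂ h w)
    {m : ℕ} (hm : Tendsto (fun z => z ^ m • h z) (cobounded ℂ) (𝓝 0)) :
    Tendsto (fun z => z ^ (m + 1) • deriv h z) (cobounded ℂ) (𝓝 0) := by
  rw [NormedAddGroup.tendsto_nhds_zero] at hm ⊢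
  intro ε hε
  obtain ⟨M, -, hM⟩ :=
    hasBasis_cobounded_norm.eventually_iff.1 (hm (ε / 2 ^ (m + 2)) (by positivity))
  filter_upwards [tendsto_norm_cobounded_atTop.eventually_gt_atTop (2 * max (max M ρ) 0)]
    with z hz
  have hz0 : z ≠ 0 := norm_pos_iff.1 (by linarith [le_max_right (max M ρ) 0])
  have hbound := norm_pow_succ_smul_deriv_le hd m hz0
    (by linarith [le_max_right M ρ, le_max_left (max M ρ) 0])
    fun w hw => (hM (by linarith [le_max_left M ρ, le_max_left (max M ρ) 0] : M ≤ ‖w‖)).le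
  calc ‖z ^ (m + 1) • deriv h z‖ ≤ 2 ^ (m + 1) * (ε / 2 ^ (m + 2)) := hbound
    _ = ε / 2 := by rw [pow_succ 2 (m + 1)]; field_simp
    _ < ε := half_lt_self hε

theorem tendsto_zero_of_tendsto_mul_cobounded {𝕜 : Type*} [NormedField 𝕜] {g : 𝕜 → 𝕜} {c : 𝕜}
    (h : Tendsto (fun z => z * g z) (cobounded 𝕜) (𝓝 c)) :
    Tendsto g (cobounded 𝕜) (𝓝 0) := by
  have := tendsto_inv₀_cobounded.mul h
  rw [zero_mul] at this
  refine this.congr' ?_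
  filter_upwards [eventually_ne_cobounded 0] with z hz
  rw [inv_mul_cancel_left₀ hz]

theorem tendsto_cobounded_of_tendsto_sub_self {E : Type*} [SeminormedAddCommGroup E]
    {f : E → E} {c : E} (h : Tendsto (fun z => f z - z) (cobounded E) (𝓝 c)) :
    Tendsto f (cobounded E) (cobounded E) := by
  rw [← tendsto_norm_atTop_iff_cobounded]
  refine tendsto_atTop_mono (fun z => ?_)
    (tendsto_norm_cobounded_atTop.atTop_add h.norm.neg)
  have := norm_sub_norm_le z (z - f z)
  rw [sub_sub_cancel, norm_sub_rev] at this
  linarith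

theorem tendsto_self_div_of_tendsto_sub_self {𝕜 : Type*} [NormedField 𝕜] {f : 𝕜 → 𝕜} {c : 𝕜}
    (hnorm : Tendsto (fun z => f z - z) (cobounded 𝕜) (𝓝 c)) :
    Tendsto (fun z => z / f z) (cobounded 𝕜) (𝓝 1) := by
  have hfinf := tendsto_cobounded_of_tendsto_sub_self hnorm
  have := tendsto_const_nhds (x := (1 : 𝕜)).sub (hnorm.mul (tendsto_inv₀_cobounded.comp hfinf))
  rw [mul_zero, sub_zero] at this
  refine this.congr' ?_
  filter_upwards [hfinf.eventually_ne_cobounded 0] with z hz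
  simp only [Function.comp_apply]
  field_simp
  ring

section Holomorphic

variable {f : ℂ → ℂ} {R : ℝ}

theorem tendsto_mul_deriv_sub_one (hf : ∀ z : ℂ, R < ‖z‖ → DifferentiableAt ℂ f z)
    (hnorm : Tendsto (fun z => f z - z) (cobounded ℂ) (𝓝 0)) :
    Tendsto (fun z => z * (deriv f z - 1)) (cobounded ℂ) (𝓝 0) := by
  have := tendsto_pow_succ_smul_deriv_cobounded (m := 0)
    (fun w hw => (hf w hw).sub differentiableAt_id) (by simpa using hnorm)
  simp only [zero_add, pow_one, smul_eq_mul] at this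
  refine this.congr' ?_
  filter_upwards [tendsto_norm_cobounded_atTop.eventually_gt_atTop R] with z hz
  rw [deriv_sub (hf z hz) differentiableAt_id, deriv_id]

theorem tendsto_deriv_nhds_one (hf : ∀ z : ℂ, R < ‖z‖ → DifferentiableAt ℂ f z)
    (hnorm : Tendsto (fun z => f z - z) (cobounded ℂ) (𝓝 0)) :
    Tendsto (deriv f) (cobounded ℂ) (𝓝 1) := by
  simpa using (tendsto_zero_of_tendsto_mul_cobounded
    (tendsto_mul_deriv_sub_one hf hnorm)).add_const 1

theorem tendsto_sq_mul_deriv_deriv (hf : ∀ z : ℂ, R < ‖z‖ → DifferentiableAt ℂ f z)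
    (hnorm : Tendsto (fun z => f z - z) (cobounded ℂ) (𝓝 0)) :
    Tendsto (fun z => z ^ 2 * deriv (deriv f) z) (cobounded ℂ) (𝓝 0) := by
  have hopen : IsOpen {w : ℂ | R < ‖w‖} := isOpen_lt continuous_const continuous_norm
  have hf' : DifferentiableOn ℂ (deriv f) {w : ℂ | R < ‖w‖} :=
    DifferentiableOn.deriv (fun w hw => (hf w hw).differentiableWithinAt) hopen
  have := tendsto_pow_succ_smul_deriv_cobounded (m := 1)
    (fun w hw => ((hf'.differentiableAt (hopen.mem_nhds hw)).sub_const 1))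
    (by simpa using tendsto_mul_deriv_sub_one hf hnorm)
  simpa only [smul_eq_mul, deriv_sub_const] using this

end Holomorphic

/-- `P z = W / z + V / z ^ 2 + o(1 / z ^ 2)` as `z → ∞`. -/
def HasExpansionAtInfty (P : ℂ → ℂ) (W V : ℂ) : Prop :=
  Tendsto (fun z => z * P z) (cobounded ℂ) (𝓝 W) ∧
    Tendsto (fun z => z * (z * P z - W)) (cobounded ℂ) (𝓝 V)

namespace HasExpansionAtInfty

variable {P Q : ℂ → ℂ} {W V W' V' : ℂ}

theorem unique (hP : HasExpansionAtInfty P W V) (hQ : HasExpansionAtInfty Q W' V')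
    (h : P =ᶠ[cobounded ℂ] Q) : W = W' ∧ V = V' := by
  have hW : W = W' := tendsto_nhds_unique hP.1 <|
    hQ.1.congr' <| h.mono fun z (hz : P z = Q z) => show z * Q z = z * P z by rw [hz]
  subst hW
  exact ⟨rfl, tendsto_nhds_unique hP.2 <| hQ.2.congr' <|
    h.mono fun z (hz : P z = Q z) => show z * (z * Q z - W) = z * (z * P z - W) by rw [hz]⟩

theorem add (hP : HasExpansionAtInfty P W V) (hQ : HasExpansionAtInfty Q W' V') :
    HasExpansionAtInfty (fun z => P z + Q z) (W + W') (V + V') :=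
  ⟨(hP.1.add hQ.1).congr fun z => (mul_add _ _ _).symm,
    (hP.2.add hQ.2).congr fun z => by ring⟩

theorem sum {ι : Type*} (s : Finset ι) {P : ι → ℂ → ℂ} {W V : ι → ℂ}
    (h : ∀ i ∈ s, HasExpansionAtInfty (P i) (W i) (V i)) :
    HasExpansionAtInfty (fun z => ∑ i ∈ s, P i z) (∑ i ∈ s, W i) (∑ i ∈ s, V i) := by
  refine ⟨(tendsto_finsetSum s fun i hi => (h i hi).1).congr fun z => ?_,
    (tendsto_finsetSum s fun i hi => (h i hi).2).congr fun z => ?_⟩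
  · rw [Finset.mul_sum]
  · rw [Finset.mul_sum, ← Finset.sum_sub_distrib, Finset.mul_sum]

theorem of_tendsto_sq_mul (h : Tendsto (fun z => z ^ 2 * P z) (cobounded ℂ) (𝓝 0)) :
    HasExpansionAtInfty P 0 0 := by
  have h' : Tendsto (fun z => z * (z * P z)) (cobounded ℂ) (𝓝 0) := by
    simpa only [sq, mul_assoc] using h
  exact ⟨tendsto_zero_of_tendsto_mul_cobounded h', by simpa only [sub_zero] using h'⟩

theorem comp_mul_deriv (hP : HasExpansionAtInfty P W V) {f : ℂ → ℂ} {R : ℝ}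
    (hf : ∀ z : ℂ, R < ‖z‖ → DifferentiableAt ℂ f z)
    (hnorm : Tendsto (fun z => f z - z) (cobounded ℂ) (𝓝 0)) :
    HasExpansionAtInfty (fun z => P (f z) * deriv f z) W V := by
  have hfinf := tendsto_cobounded_of_tendsto_sub_self hnorm
  have h1 := hP.1.comp hfinf
  have h2 := hP.2.comp hfinf
  have hdiv := tendsto_self_div_of_tendsto_sub_self hnorm
  have hdf := tendsto_deriv_nhds_one hf hnorm
  have hdev : Tendsto (fun z => z * deriv f z - f z) (cobounded ℂ) (𝓝 0) := by
    simpa only [sub_zero] using ((tendsto_mul_deriv_sub_one hf hnorm).sub hnorm).congr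
      fun z => by ring
  constructor
  · have := (hdiv.mul h1).mul hdf
    rw [one_mul, mul_one] at this
    refine this.congr' ?_
    filter_upwards [hfinf.eventually_ne_cobounded 0] with z hz
    simp only [Function.comp_apply]
    field_simp
  · -- `z (z P(f) f' - W) = (z f' - f) (z / f) (f P(f)) + (z / f) f (f P(f) - W)`
    have := (hdev.mul (hdiv.mul h1)).add (hdiv.mul h2)
    rw [zero_mul, zero_add, one_mul] at this
    refine this.congr' ?_
    filter_upwards [hfinf.eventually_ne_cobounded 0] with z hz
    simp only [Function.comp_apply]
    field_simp
    ring

end HasExpansionAtInfty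

theorem hasExpansionAtInfty_div_sub (c q : ℂ) :
    HasExpansionAtInfty (fun z => c / (z - q)) c (c * q) := by
  have hfrac : Tendsto (fun z => z / (z - q)) (cobounded ℂ) (𝓝 1) :=
    tendsto_self_div_of_tendsto_sub_self (f := fun z => z - q) (c := -q) (by simp)
  refine ⟨?_, ?_⟩
  · simpa only [mul_one] using (hfrac.const_mul c).congr fun z => by ring
  · simpa only [mul_one] using (hfrac.const_mul (c * q)).congr' <|
      (eventually_ne_cobounded q).mono fun z hz => by
        rw [← sub_ne_zero] at hz
        field_simp
        ring

theorem hasExpansionAtInfty_const_mul_deriv_deriv_div_deriv {f : ℂ → ℂ} {R : ℝ} (c : ℂ)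
    (hf : ∀ z : ℂ, R < ‖z‖ → DifferentiableAt ℂ f z)
    (hnorm : Tendsto (fun z => f z - z) (cobounded ℂ) (𝓝 0)) :
    HasExpansionAtInfty (fun z => c * deriv (deriv f) z / deriv f z) 0 0 := by
  refine HasExpansionAtInfty.of_tendsto_sq_mul ?_
  have := ((tendsto_sq_mul_deriv_deriv hf hnorm).const_mul c).div
    (tendsto_deriv_nhds_one hf hnorm) one_ne_zero
  rw [mul_zero, zero_div] at this
  exact this.congr fun z => by simp only [Pi.div_apply]; ring

theorem stmt_9_general (N n : ℕ) (x ξ β μm μp : Fin N → ℝ) (α : Fin n → ℝ)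
    (a A : Fin n → ℂ) (Cm Cp : Fin N → ℂ)
    (R : ℝ) (f : ℂ → ℂ)
    (hf : ∀ z : ℂ, R < ‖z‖ → DifferentiableAt ℂ f z)
    (hnorm : Tendsto (fun z => f z - z) (comap (fun z : ℂ => ‖z‖) atTop) (nhds 0))
    (R' : ℝ)
    (hid : ∀ z : ℂ, R' < ‖z‖ →
      deriv f z ≠ 0 ∧ (∀ k, f z ≠ ((x k : ℝ) : ℂ)) ∧ (∀ j, f z ≠ a j) ∧
      (∀ k, z ≠ ((ξ k : ℝ) : ℂ)) ∧ (∀ k, z ≠ Cm k) ∧ (∀ k, z ≠ Cp k) ∧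
      (∀ j, z ≠ A j) ∧
      (∑ k, (2 / (z - ((ξ k : ℝ) : ℂ)) + (μm k : ℂ) / (z - Cm k)
          + (μp k : ℂ) / (z - Cp k)))
        + ∑ j, (α j : ℂ) / (z - A j)
      = ((∑ k, (β k : ℂ) / (f z - ((x k : ℝ) : ℂ)))
          + ∑ j, (α j : ℂ) / (f z - a j)) * deriv f z
        + 2 * deriv (deriv f) z / deriv f z) :
    (∑ k, (2 + μm k + μp k)) = ∑ k, β k ∧
    ((2 * ∑ k, ξ k : ℝ) : ℂ)
      = -(∑ k, ((μm k : ℂ) * Cm k + (μp k : ℂ) * Cp k))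
        - (∑ j, (α j : ℂ) * A j)
        + (((∑ k, β k * x k : ℝ) : ℂ) + ∑ j, (α j : ℂ) * a j) := by
  rw [comap_norm_atTop] at hnorm
  have hlhs := (HasExpansionAtInfty.sum Finset.univ fun k _ =>
      ((hasExpansionAtInfty_div_sub 2 (ξ k)).add (hasExpansionAtInfty_div_sub (μm k) (Cm k))).add
        (hasExpansionAtInfty_div_sub (μp k) (Cp k))).add
    (HasExpansionAtInfty.sum Finset.univ fun j _ => hasExpansionAtInfty_div_sub (α j) (A j))
  have hrhs := (((HasExpansionAtInfty.sum Finset.univ fun k _ =>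
      hasExpansionAtInfty_div_sub (β k) (x k)).add
    (HasExpansionAtInfty.sum Finset.univ fun j _ =>
      hasExpansionAtInfty_div_sub (α j) (a j))).comp_mul_deriv hf hnorm).add
    (hasExpansionAtInfty_const_mul_deriv_deriv_div_deriv 2 hf hnorm)
  obtain ⟨hW, hV⟩ := hlhs.unique hrhs <|
    (tendsto_norm_cobounded_atTop.eventually_gt_atTop R').mono fun z hz =>
      (hid z hz).2.2.2.2.2.2.2
  refine ⟨?_, ?_⟩
  · exact_mod_cast add_right_cancel (hW.trans (add_zero _))
  · push_cast
    simp only [Finset.sum_add_distrib, ← Finset.mul_sum] at hV ⊢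
    linear_combination hV

/-- formula (14) of Theorem 5.1: multiple-slit analogue of
formula (3), by matching `1/z` and `1/z²` coefficients at `∞`.  If `f` is
holomorphic on `{|z| > R}` with `f(z) - z → 0` as `|z| → ∞` and, for all large
`|z|`, `Σ_k [2/(z-ξ_k) + μ_k⁻/(z-C_k⁻) + μ_k⁺/(z-C_k⁺)] + Σ_j α_j/(z-A_j)
 = (Σ_k β_k/(f z - x_k) + Σ_j α_j/(f z - a_j))·f'(z) + 2f''(z)/f'(z)`, then
`Σ_k (2 + μ_k⁻ + μ_k⁺) = Σ_k β_k` and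
`2 Σ_k ξ_k = -Σ_k (μ_k⁻ C_k⁻ + μ_k⁺ C_k⁺) - Σ_j α_j A_j + Σ₀` with
`Σ₀ = Σ_k β_k x_k + Σ_j α_j a_j`. -/
theorem stmt_9 (N n : ℕ) (x ξ β μm μp : Fin N → ℝ) (α : Fin n → ℝ)
    (a A : Fin n → ℂ) (Cm Cp : Fin N → ℂ)
    (R : ℝ) (hR : 0 < R) (f : ℂ → ℂ)
    (hf : ∀ z : ℂ, R < ‖z‖ → DifferentiableAt ℂ f z)
    (hnorm : Tendsto (fun z => f z - z) (comap (fun z : ℂ => ‖z‖) atTop) (nhds 0))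
    (R' : ℝ) (hR' : R ≤ R')
    (hid : ∀ z : ℂ, R' < ‖z‖ →
      deriv f z ≠ 0 ∧ (∀ k, f z ≠ ((x k : ℝ) : ℂ)) ∧ (∀ j, f z ≠ a j) ∧
      (∀ k, z ≠ ((ξ k : ℝ) : ℂ)) ∧ (∀ k, z ≠ Cm k) ∧ (∀ k, z ≠ Cp k) ∧
      (∀ j, z ≠ A j) ∧
      (∑ k, (2 / (z - ((ξ k : ℝ) : ℂ)) + (μm k : ℂ) / (z - Cm k)
          + (μp k : ℂ) / (z - Cp k)))
        + ∑ j, (α j : ℂ) / (z - A j)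
      = ((∑ k, (β k : ℂ) / (f z - ((x k : ℝ) : ℂ)))
          + ∑ j, (α j : ℂ) / (f z - a j)) * deriv f z
        + 2 * deriv (deriv f) z / deriv f z) :
    (∑ k, (2 + μm k + μp k)) = ∑ k, β k ∧
    ((2 * ∑ k, ξ k : ℝ) : ℂ)
      = -(∑ k, ((μm k : ℂ) * Cm k + (μp k : ℂ) * Cp k))
        - (∑ j, (α j : ℂ) * A j)
        + (((∑ k, β k * x k : ℝ) : ℂ) + ∑ j, (α j : ℂ) * a j) :=
  stmt_9_general N n x ξ β μm μp α a A Cm Cp R f hf hnorm R' hid
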